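/- arXiv:2004.00566 — 2 statements merged into one kernel-verified Lean document; each statement's English description precedes it below -/
import Mathlib

section
/- Let P_A, P_B be orthogonal projections onto subspaces U, V, and T = (I-P_B)(I-P_A). For any y, write y = u + w where u is the orthogonal projection of y onto U+V and w is orthogonal to U+V. Then T^k y = T^k u + w for all k, and ‖T^k y - w‖ = ‖T^k u‖ → 0 as k → ∞. -/
/-!
The residual map `T = (I - P_V)(I - P_U)` fixes every vector orthogonal to both `U` and `V`,
and it maps `U ⊔ V` into itself. On `U ⊔ V` it strictly shrinks every nonzero vector: a vector
fixed in norm by both `I - P_U` and `I - P_V` is orthogonal to `U` and to `V`, hence to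
`U ⊔ V`. In finite dimension, compactness of the unit sphere turns this pointwise strict
contraction into an operator-norm bound `‖T|_{U ⊔ V}‖ < 1`, so `T^k u → 0` for `u ∈ U ⊔ V`.
-/

open Submodule Filter Topology

noncomputable def proj {E : Type*} [NormedAddCommGroup E] [InnerProductSpace ℝ E]
    [FiniteDimensional ℝ E] (U : Submodule ℝ E) : E →ₗ[ℝ] E :=
  U.subtype ∘ₗ (orthogonalProjection U).toLinearMap

section Contraction

variable {F G : Type*} [NormedAddCommGroup F] [NormedSpace ℝ F] [FiniteDimensional ℝ F]
  [NormedAddCommGroup G] [NormedSpace ℝ G]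

theorem ContinuousLinearMap.opNorm_lt_one_of_norm_apply_lt (f : F →L[ℝ] G)
    (hf : ∀ x, x ≠ 0 → ‖f x‖ < ‖x‖) : ‖f‖ < 1 := by
  cases subsingleton_or_nontrivial F with
  | inl _ => simp [Subsingleton.elim f 0]
  | inr _ =>
    obtain ⟨z, hz, hmax⟩ := (isCompact_sphere (0 : F) 1).exists_isMaxOn
      (NormedSpace.sphere_nonempty.2 zero_le_one) f.continuous.norm.continuousOn
    have hz1 : ‖z‖ = 1 := by simpa using hz
    calc ‖f‖ ≤ ‖f z‖ :=
          f.opNorm_le_of_unit_norm (norm_nonneg _) fun x hx ↦ hmax (by simpa using hx)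
      _ < 1 := hz1 ▸ hf z (by rintro rfl; simp at hz1)

theorem Module.End.tendsto_pow_apply_zero_of_norm_apply_lt (f : Module.End ℝ F)
    (hf : ∀ x, x ≠ 0 → ‖f x‖ < ‖x‖) (x : F) :
    Tendsto (fun k ↦ (f ^ k) x) atTop (𝓝 0) := by
  set g := LinearMap.toContinuousLinearMap f
  have hg : ‖g‖ < 1 := g.opNorm_lt_one_of_norm_apply_lt hf
  have hpow : ∀ k, (f ^ k) x = (g ^ k) x := fun k ↦ by
    rw [← ContinuousLinearMap.coe_coe, ContinuousLinearMap.toLinearMap_pow]; rfl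
  simp_rw [hpow]
  simpa only [Function.comp_def, ContinuousLinearMap.apply_apply, map_zero] using
    ((ContinuousLinearMap.apply ℝ F x).continuous.tendsto 0).comp
      (tendsto_pow_atTop_nhds_zero_of_norm_lt_one hg)

theorem Module.End.tendsto_pow_apply_zero_of_mapsTo (f : Module.End ℝ F) {W : Submodule ℝ F}
    (hW : ∀ x ∈ W, f x ∈ W) (hf : ∀ x ∈ W, x ≠ 0 → ‖f x‖ < ‖x‖) {x : F} (hx : x ∈ W) :
    Tendsto (fun k ↦ (f ^ k) x) atTop (𝓝 0) := by
  have hf' : ∀ v : W, v ≠ 0 → ‖f.restrict hW v‖ < ‖v‖ := fun v hv ↦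
    hf v v.2 (by simpa using hv)
  have hpow : ∀ k, ((f.restrict hW ^ k) ⟨x, hx⟩ : F) = (f ^ k) x := fun k ↦ by
    rw [Module.End.pow_restrict]; rfl
  simpa only [hpow, Function.comp_def, ZeroMemClass.coe_zero] using
    (continuous_subtype_val.tendsto 0).comp
      (Module.End.tendsto_pow_apply_zero_of_norm_apply_lt _ hf' ⟨x, hx⟩)

end Contraction

section Residual

variable {E : Type*} [NormedAddCommGroup E] [InnerProductSpace ℝ E] [FiniteDimensional ℝ E]
  (U V : Submodule ℝ E)

theorem proj_mem (x : E) : proj U x ∈ U := (U.orthogonalProjectionOnto x).2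

theorem sub_proj_apply (x : E) : x - proj U x = Uᗮ.starProjection x :=
  (starProjection_orthogonal_val x).symm

theorem sub_proj_mem_orthogonal (x : E) : x - proj U x ∈ Uᗮ :=
  U.sub_starProjection_mem_orthogonal x

variable {U V}

theorem sub_proj_eq_self {x : E} (hx : x ∈ Uᗮ) : x - proj U x = x := by
  rw [sub_proj_apply, starProjection_eq_self_iff.2 hx]

theorem norm_sub_proj_le (x : E) : ‖x - proj U x‖ ≤ ‖x‖ := by
  rw [sub_proj_apply]
  exact Uᗮ.norm_starProjection_apply_le x

theorem norm_sub_proj_lt {x : E} (hx : x ∉ Uᗮ) : ‖x - proj U x‖ < ‖x‖ :=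
  (norm_sub_proj_le x).lt_of_ne <| by rwa [sub_proj_apply, Ne, ← mem_iff_norm_starProjection]

variable (U V) in
noncomputable def residualMap : Module.End ℝ E :=
  (LinearMap.id - proj V) ∘ₗ (LinearMap.id - proj U)

theorem residualMap_apply (x : E) :
    residualMap U V x = (x - proj U x) - proj V (x - proj U x) := rfl

theorem residualMap_apply_of_mem_orthogonal {x : E} (hx : x ∈ (U ⊔ V)ᗮ) :
    residualMap U V x = x := by
  rw [← inf_orthogonal] at hx
  rw [residualMap_apply, sub_proj_eq_self hx.1, sub_proj_eq_self hx.2]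

theorem residualMap_pow_apply_of_mem_orthogonal {x : E} (hx : x ∈ (U ⊔ V)ᗮ) (k : ℕ) :
    (residualMap U V ^ k) x = x := by
  rw [Module.End.pow_apply]
  exact Function.IsFixedPt.iterate (residualMap_apply_of_mem_orthogonal hx) k

theorem residualMap_apply_mem_sup {x : E} (hx : x ∈ U ⊔ V) : residualMap U V x ∈ U ⊔ V := by
  rw [residualMap_apply]
  exact sub_mem (sub_mem hx (mem_sup_left (proj_mem U x))) (mem_sup_right (proj_mem V _))

theorem norm_residualMap_apply_lt {x : E} (hx : x ∈ U ⊔ V) (hx0 : x ≠ 0) :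
    ‖residualMap U V x‖ < ‖x‖ := by
  rw [residualMap_apply]
  by_cases hxU : x ∈ Uᗮ
  · have hxV : x ∉ Vᗮ := fun hxV ↦ hx0 <| (U ⊔ V).orthogonal_disjoint.le_bot
      ⟨hx, by rw [← inf_orthogonal]; exact ⟨hxU, hxV⟩⟩
    rw [sub_proj_eq_self hxU]
    exact norm_sub_proj_lt hxV
  · exact (norm_sub_proj_le _).trans_lt (norm_sub_proj_lt hxU)

theorem tendsto_residualMap_pow_apply_zero {x : E} (hx : x ∈ U ⊔ V) :
    Tendsto (fun k ↦ (residualMap U V ^ k) x) atTop (𝓝 0) :=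
  (residualMap U V).tendsto_pow_apply_zero_of_mapsTo (fun _ ↦ residualMap_apply_mem_sup)
    (fun _ ↦ norm_residualMap_apply_lt) hx

end Residual

theorem stmt10 {E : Type*} [NormedAddCommGroup E] [InnerProductSpace ℝ E] [FiniteDimensional ℝ E]
    (U V : Submodule ℝ E) (y u w : E)
    (hu : u = proj (U ⊔ V) y) (hw : w = y - u) :
    (∀ k : ℕ,
      ((((LinearMap.id - proj V) ∘ₗ (LinearMap.id - proj U) : Module.End ℝ E)) ^ k) y =
        ((((LinearMap.id - proj V) ∘ₗ (LinearMap.id - proj U) : Module.End ℝ E)) ^ k) u + w) ∧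
    Tendsto (fun k : ℕ =>
        ‖((((LinearMap.id - proj V) ∘ₗ (LinearMap.id - proj U) : Module.End ℝ E)) ^ k) y - w‖)
      atTop (𝓝 0) := by
  change (∀ k : ℕ, (residualMap U V ^ k) y = (residualMap U V ^ k) u + w) ∧
    Tendsto (fun k : ℕ ↦ ‖(residualMap U V ^ k) y - w‖) atTop (𝓝 0)
  have huW : u ∈ U ⊔ V := hu ▸ proj_mem _ y
  have hwW : w ∈ (U ⊔ V)ᗮ := hw ▸ hu ▸ sub_proj_mem_orthogonal _ y
  have hsplit : ∀ k : ℕ, (residualMap U V ^ k) y = (residualMap U V ^ k) u + w := fun k ↦ by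
    rw [← residualMap_pow_apply_of_mem_orthogonal hwW k, ← map_add, hw, add_sub_cancel]
  refine ⟨hsplit, ?_⟩
  simp_rw [hsplit, add_sub_cancel_right]
  simpa using (tendsto_residualMap_pow_apply_zero huW).norm
end

section
/- Let P_A, P_B be orthogonal projections onto subspaces U, V of a finite-dimensional real inner product space. The restriction of T = (I-P_B)(I-P_A) to the subspace U + V has spectral radius strictly less than 1. -/
/-!
Write `I - P_U` and `I - P_V` as the orthogonal projections onto `Uᗮ` and `Vᗮ`. A composition of
two orthogonal projections is norm-nonincreasing, and it preserves the norm of `x` only if `x` lies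
in both ranges. On `U ⊔ V = (Uᗮ ⊓ Vᗮ)ᗮ` this forces `x = 0`, so every eigenvalue of the restricted
operator has modulus `< 1`; in finite dimension the spectrum consists of the eigenvalues.
-/

open Submodule Filter Topology

open scoped NNReal

section Contraction

variable {𝕜 E : Type*} [RCLike 𝕜] [NormedAddCommGroup E] [InnerProductSpace 𝕜 E]
  (K L : Submodule 𝕜 E) [K.HasOrthogonalProjection] [L.HasOrthogonalProjection]

theorem norm_starProjection_starProjection_lt {x : E} (hx : x ∈ (K ⊓ L)ᗮ) (hx0 : x ≠ 0) :
    ‖L.starProjection (K.starProjection x)‖ < ‖x‖ := by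
  have hK := K.norm_starProjection_apply_le x
  have hL := L.norm_starProjection_apply_le (K.starProjection x)
  refine (hL.trans hK).lt_of_ne fun heq => hx0 ?_
  have hxK : x ∈ K := (K.mem_iff_norm_starProjection x).2 (le_antisymm hK (heq ▸ hL))
  rw [K.starProjection_eq_self_iff.2 hxK] at heq
  have hxL : x ∈ L := (L.mem_iff_norm_starProjection x).2 heq
  exact (K ⊓ L).inf_orthogonal_eq_bot.le ⟨⟨hxK, hxL⟩, hx⟩

theorem norm_lt_one_of_starProjection_starProjection_eq_smul {μ : 𝕜} {x : E}
    (hx : x ∈ (K ⊓ L)ᗮ) (hx0 : x ≠ 0) (h : L.starProjection (K.starProjection x) = μ • x) :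
    ‖μ‖ < 1 := by
  have := norm_starProjection_starProjection_lt K L hx hx0
  rw [h, norm_smul] at this
  exact (mul_lt_iff_lt_one_left (norm_pos_iff.2 hx0)).1 this

end Contraction

theorem spectralRadius_toContinuousLinearMap_lt {𝕜 F : Type*} [NontriviallyNormedField 𝕜]
    [ProperSpace 𝕜] [NormedAddCommGroup F] [NormedSpace 𝕜 F] [FiniteDimensional 𝕜 F]
    (f : Module.End 𝕜 F) {r : ℝ≥0} (hr : 0 < r)
    (hf : ∀ μ, f.HasEigenvalue μ → ‖μ‖₊ < r) :
    spectralRadius 𝕜 (LinearMap.toContinuousLinearMap f) < r := by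
  have : CompleteSpace (F →L[𝕜] F) := FiniteDimensional.complete 𝕜 _
  have hspec : spectrum 𝕜 (LinearMap.toContinuousLinearMap f) = spectrum 𝕜 f :=
    AlgEquiv.spectrum_eq (Module.End.toContinuousLinearMap F) f
  rcases (spectrum 𝕜 f).eq_empty_or_nonempty with hempty | hne
  · simpa [spectralRadius, hspec, hempty] using hr
  · refine spectrum.spectralRadius_lt_of_forall_lt_of_nonempty (hspec ▸ hne) fun μ hμ => ?_
    rw [hspec, ← Module.End.hasEigenvalue_iff_mem_spectrum] at hμ
    exact hf μ hμ

theorem id_sub_proj_apply {E : Type*} [NormedAddCommGroup E] [InnerProductSpace ℝ E]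
    [FiniteDimensional ℝ E] (U : Submodule ℝ E) (x : E) :
    (LinearMap.id - proj U : Module.End ℝ E) x = Uᗮ.starProjection x := by
  rw [starProjection_orthogonal]
  rfl

theorem stmt14 {E : Type*} [NormedAddCommGroup E] [InnerProductSpace ℝ E] [FiniteDimensional ℝ E]
    (U V : Submodule ℝ E)
    (hT : ∀ x ∈ U ⊔ V,
      ((LinearMap.id - proj V) ∘ₗ (LinearMap.id - proj U) : Module.End ℝ E) x ∈ U ⊔ V) :
    spectralRadius ℝ
      ((((LinearMap.id - proj V) ∘ₗ (LinearMap.id - proj U) : Module.End ℝ E)).restrict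
        hT).toContinuousLinearMap < 1 := by
  refine spectralRadius_toContinuousLinearMap_lt _ one_pos fun μ hμ => ?_
  obtain ⟨v, hv⟩ := hμ.exists_hasEigenvector
  have hv0 : (v : E) ≠ 0 := fun h => hv.2 (Subtype.ext h)
  have hTv : Vᗮ.starProjection (Uᗮ.starProjection v) = μ • (v : E) := by
    simpa only [LinearMap.coe_restrict_apply, LinearMap.comp_apply, id_sub_proj_apply,
      coe_smul] using congrArg Subtype.val hv.apply_eq_smul
  have hvperp : (v : E) ∈ (Uᗮ ⊓ Vᗮ)ᗮ := by
    rw [inf_orthogonal, orthogonal_orthogonal]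
    exact v.2
  exact_mod_cast norm_lt_one_of_starProjection_starProjection_eq_smul _ _ hvperp hv0 hTv
end
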